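/- Let k be a field, R = k[x,y] localized at (x,y), and m = (x,y)R. Then for all m ≥ 0, the colon ideal ((x²,xy)^{m+1} : (x)) equals the ideal generated by the monomials x^{2m+1-i}y^i for 0 ≤ i ≤ m+1. -/

import Mathlib

/-!
Since `(x², xy) = (x)(x, y)`, the ideal `(x², xy)^{m+1}` factors as `(x) · (x^m)(x, y)^{m+1}`.
As `R` is a domain and `x ≠ 0`, taking the colon by `(x)` cancels the factor `(x)`, and
`(x^m)(x, y)^{m+1}` is spanned by the monomials `x^{m+i} y^j` with `i + j = m + 1`.
-/

open MvPolynomial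

/-- The ideal `(x, y)` of the polynomial ring `k[x,y]`. -/
noncomputable def xyIdeal (k : Type*) [Field k] : Ideal (MvPolynomial (Fin 2) k) :=
  Ideal.span {X 0, X 1}

namespace Ideal

variable {R : Type*} [CommRing R]

theorem span_pair_pow (a b : R) (n : ℕ) :
    span {a, b} ^ n = span {z : R | ∃ i j : ℕ, i + j = n ∧ z = a ^ i * b ^ j} := by
  induction n with
  | zero =>
    rw [pow_zero, one_eq_top, eq_comm, eq_top_iff_one]
    exact subset_span ⟨0, 0, rfl, by simp⟩
  | succ n ih =>
    rw [pow_succ', ih, span_mul_span']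
    congr 1
    ext z
    simp only [Set.mem_mul, Set.mem_insert_iff, Set.mem_singleton_iff, Set.mem_ofPred_eq]
    constructor
    · rintro ⟨c, rfl | rfl, _, ⟨i, j, rfl, rfl⟩, rfl⟩
      · exact ⟨i + 1, j, by omega, by ring⟩
      · exact ⟨i, j + 1, by omega, by ring⟩
    · rintro ⟨_ | i, j, hij, rfl⟩
      · exact ⟨b, Or.inr rfl, a ^ 0 * b ^ n, ⟨0, n, zero_add n, rfl⟩, by
          rw [show j = n + 1 by omega]; ring⟩
      · exact ⟨a, Or.inl rfl, a ^ i * b ^ j, ⟨i, j, by omega, rfl⟩, by ring⟩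

theorem span_singleton_mul_colon_span_singleton [IsDomain R] {a : R} (ha : a ≠ 0)
    (J : Ideal R) : (span {a} * J).colon (span {a}) = J := by
  ext z
  simp [mem_span_singleton_mul, mul_comm z, mul_right_inj' ha]

theorem span_sq_mul_pow_colon_span_singleton [IsDomain R] {a : R} (ha : a ≠ 0) (b : R)
    (m : ℕ) :
    (span {a ^ 2, a * b} ^ (m + 1)).colon (span {a}) =
      span {z : R | ∃ i : ℕ, i ≤ m + 1 ∧ z = a ^ (2 * m + 1 - i) * b ^ i} := by
  have hfactor : span {a ^ 2, a * b} = span {a} * span {a, b} := by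
    rw [span_mul_span', Set.singleton_mul, Set.image_pair, ← sq]
  rw [hfactor, mul_pow, span_singleton_pow, pow_succ', ← span_singleton_mul_span_singleton,
    mul_assoc, span_singleton_mul_colon_span_singleton ha, span_pair_pow, span_mul_span',
    Set.singleton_mul]
  congr 1
  ext z
  simp only [Set.mem_image, Set.mem_ofPred_eq]
  constructor
  · rintro ⟨_, ⟨i, j, hij, rfl⟩, rfl⟩
    exact ⟨j, by omega, by rw [← mul_assoc, ← pow_add, show m + i = 2 * m + 1 - j by omega]⟩
  · rintro ⟨i, hi, rfl⟩
    exact ⟨_, ⟨m + 1 - i, i, by omega, rfl⟩, by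
      rw [← mul_assoc, ← pow_add, show m + (m + 1 - i) = 2 * m + 1 - i by omega]⟩

end Ideal

/-- Let `k` be a field, `R = k[x,y]` localized at `(x,y)`.  Then for all `m ≥ 0`,
`((x², xy)^{m+1} : (x)) = (x^{2m+1-i} y^i : 0 ≤ i ≤ m+1)`. -/
theorem colon_power_example (k : Type*) [Field k] [(xyIdeal k).IsPrime] :
    letI R := Localization.AtPrime (xyIdeal k)
    letI x : R := algebraMap (MvPolynomial (Fin 2) k) R (X 0)
    letI y : R := algebraMap (MvPolynomial (Fin 2) k) R (X 1)
    ∀ m : ℕ, (Ideal.span {x ^ 2, x * y} ^ (m + 1)).colon (Ideal.span {x}) =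
      Ideal.span {z : R | ∃ i : ℕ, i ≤ m + 1 ∧ z = x ^ (2 * m + 1 - i) * y ^ i} := by
  intro m
  have hx : algebraMap (MvPolynomial (Fin 2) k) (Localization.AtPrime (xyIdeal k)) (X 0) ≠ 0 :=
    (map_ne_zero_iff _ (FaithfulSMul.algebraMap_injective _ _)).mpr (X_ne_zero 0)
  exact Ideal.span_sq_mul_pow_colon_span_singleton hx _ m
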